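/- Let S = {u_1, ..., u_n} ⊂ ℝ^p be a set of n ≥ 3 distinct points and let u, y ∈ S be a diameter pair, i.e. ‖u − y‖ = max_{1 ≤ i, j ≤ n} ‖u_i − u_j‖. Set v = (y − u)/‖y − u‖. Then at least one of the following holds: (1/n) · Σ_{i : u_i ≠ u} ⟨(u_i − u)/‖u_i − u‖, v⟩ ≥ 1/2, or (1/n) · Σ_{i : u_i ≠ y} ⟨(u_i − y)/‖u_i − y‖, −v⟩ ≥ 1/2. -/

import Mathlib

/-!
For every point `x` within distance `d = ‖y - z‖` of both ends of a diameter `y z`, the cosines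
of the angles at `y` and at `z` in the triangle `x y z` add up to at least `1`: with
`A = ⟪x - y, z - y⟫` and `B = ⟪x - z, y - z⟫` one has `A + B = d²`, both are nonnegative, and the
cosines are `A / (‖x - y‖ d) ≥ A / d²` and `B / (‖x - z‖ d) ≥ B / d²`. Summed over all points `x = u i`
(the excluded terms `i = a` and `i = b` would vanish anyway, as `‖0‖⁻¹ • 0 = 0`), the two averages
add up to at least `1`.
-/

open scoped RealInnerProductSpace

section Triangle

variable {E : Type*} [NormedAddCommGroup E] [InnerProductSpace ℝ E]

theorem inner_sub_add_inner_sub (x y z : E) :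
    ⟪x - y, z - y⟫ + ⟪x - z, y - z⟫ = ‖y - z‖ ^ 2 := by
  rw [← real_inner_self_eq_norm_sq]
  simp only [inner_sub_left, inner_sub_right, real_inner_comm]
  ring

theorem inner_sub_nonneg_of_norm_sub_le {x y z : E} (h : ‖x - z‖ ≤ ‖y - z‖) :
    0 ≤ ⟪x - y, z - y⟫ := by
  have hB : ⟪x - z, y - z⟫ ≤ ‖y - z‖ ^ 2 := calc
    ⟪x - z, y - z⟫ ≤ ‖x - z‖ * ‖y - z‖ := real_inner_le_norm _ _
    _ ≤ ‖y - z‖ * ‖y - z‖ := by gcongr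
    _ = ‖y - z‖ ^ 2 := (sq _).symm
  linarith [inner_sub_add_inner_sub x y z]

theorem inner_div_norm_sq_le_inner_normalize {w v : E} (hwv : ‖w‖ ≤ ‖v‖) (hinner : 0 ≤ ⟪w, v⟫) :
    ⟪w, v⟫ / ‖v‖ ^ 2 ≤ ⟪‖w‖⁻¹ • w, ‖v‖⁻¹ • v⟫ := by
  rw [real_inner_smul_left, real_inner_smul_right, ← mul_assoc, ← mul_inv, mul_comm,
    ← div_eq_mul_inv, sq]
  rcases eq_or_ne w 0 with rfl | hw
  · simp
  · have hw : 0 < ‖w‖ := norm_pos_iff.mpr hw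
    exact div_le_div_of_nonneg_left hinner (mul_pos hw (hw.trans_le hwv)) (by gcongr)

theorem one_le_inner_normalize_add_inner_normalize {x y z : E} (hyz : y ≠ z)
    (hy : ‖x - y‖ ≤ ‖y - z‖) (hz : ‖x - z‖ ≤ ‖y - z‖) :
    1 ≤ ⟪‖x - y‖⁻¹ • (x - y), ‖z - y‖⁻¹ • (z - y)⟫ +
      ⟪‖x - z‖⁻¹ • (x - z), -(‖z - y‖⁻¹ • (z - y))⟫ := by
  rw [← smul_neg, neg_sub, norm_sub_rev z y]
  have hd : 0 < ‖y - z‖ ^ 2 := pow_pos (norm_pos_iff.mpr (sub_ne_zero.mpr hyz)) 2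
  have hcos_y := inner_div_norm_sq_le_inner_normalize (hy.trans_eq (norm_sub_rev y z))
    (inner_sub_nonneg_of_norm_sub_le hz)
  have hcos_z := inner_div_norm_sq_le_inner_normalize hz
    (inner_sub_nonneg_of_norm_sub_le (hy.trans_eq (norm_sub_rev y z)))
  rw [norm_sub_rev z y] at hcos_y
  calc (1 : ℝ) = (⟪x - y, z - y⟫ + ⟪x - z, y - z⟫) / ‖y - z‖ ^ 2 := by
        rw [inner_sub_add_inner_sub, div_self hd.ne']
    _ ≤ _ := by rw [add_div]; exact add_le_add hcos_y hcos_z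

end Triangle

/-- For `n ≥ 3` distinct points `u 1, …, u n` and a diameter pair `u a, u b`
(realizing the maximum pairwise distance), with `v = (u b − u a)/‖u b − u a‖`,
either the average projected direction viewed from `u a` towards `v` is at least `1/2`,
or the average projected direction viewed from `u b` towards `−v` is at least `1/2`. -/
theorem diameter_pair_vantage {p n : ℕ} (hn : 3 ≤ n)
    (u : Fin n → EuclideanSpace ℝ (Fin p)) (hu : Function.Injective u)
    (a b : Fin n)
    (hdiam : ∀ i j, ‖u i - u j‖ ≤ ‖u a - u b‖) :
    (1 : ℝ) / (n : ℝ) *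
        ∑ i ∈ Finset.univ.erase a,
          ⟪‖u i - u a‖⁻¹ • (u i - u a), ‖u b - u a‖⁻¹ • (u b - u a)⟫ ≥ 1 / 2 ∨
    (1 : ℝ) / (n : ℝ) *
        ∑ i ∈ Finset.univ.erase b,
          ⟪‖u i - u b‖⁻¹ • (u i - u b), -(‖u b - u a‖⁻¹ • (u b - u a))⟫ ≥ 1 / 2 := by
  have hab : u a ≠ u b := by
    have : Nontrivial (Fin n) := Fin.nontrivial_iff_two_le.mpr (by omega)
    obtain ⟨i, j, hij⟩ := exists_pair_ne (Fin n)
    intro h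
    simpa [h, sub_eq_zero, hu.eq_iff, hij] using hdiam i j
  have hsum : (n : ℝ) ≤
      (∑ i, ⟪‖u i - u a‖⁻¹ • (u i - u a), ‖u b - u a‖⁻¹ • (u b - u a)⟫) +
        ∑ i, ⟪‖u i - u b‖⁻¹ • (u i - u b), -(‖u b - u a‖⁻¹ • (u b - u a))⟫ := by
    rw [← Finset.sum_add_distrib]
    simpa using Finset.sum_le_sum (s := Finset.univ) fun i _ =>
      one_le_inner_normalize_add_inner_normalize hab (hdiam i a) (hdiam i b)
  rw [Finset.sum_erase _ (by simp), Finset.sum_erase _ (by simp)]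
  have hn0 : (0 : ℝ) < n := by exact_mod_cast (by omega : 0 < n)
  rw [ge_iff_le, ge_iff_le, one_div_mul_eq_div, one_div_mul_eq_div, le_div_iff₀ hn0,
    le_div_iff₀ hn0]
  by_contra! h
  linarith
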